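/- arXiv:1508.07217 — 2 statements merged into one kernel-verified Lean document; each statement's English description precedes it below -/
import Mathlib

section
/- An oriented graph S is splitable (isomorphic to R(T) for some oriented graph T) if and only if its vertex set can be partitioned into two parts V1, V2 with a bijection f: V1 → V2 such that for every u in V1, N⁺(u) = N⁻(f(u)) and N⁻(u) = N⁺(f(u)). -/
/-!
The anti-twin map `x ↦ x'` of `R(T)` swaps the two copies of `V(T)` and satisfies
`N⁺(x') = N⁻(x)`, `N⁻(x') = N⁺(x)`; an isomorphism `R(T) ≅ S` transports it to the required
partition of `S`. Conversely, from such a partition take `T = S[V₁]`: sending the primed copy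
of `V₁` to `V₂` along `f` is an isomorphism `R(T) ≅ S`, because the neighbourhoods of `f u`
are those of `u` with the arcs reversed.
-/

/-- An oriented graph: a loopless digraph with no 2-cycles (arc relation is asymmetric). -/
structure OGraph (V : Type) where
  arc : V → V → Prop
  asymm : ∀ u v, arc u v → ¬ arc v u

namespace OGraph

/-- Pushing a set `S` of vertices reverses exactly the arcs with exactly one endpoint in `S`. -/
def push {V : Type} (G : OGraph V) (S : Set V) : OGraph V where
  arc u v := (Xor' (u ∈ S) (v ∈ S) ∧ G.arc v u) ∨ (¬ Xor' (u ∈ S) (v ∈ S) ∧ G.arc u v)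
  asymm := by
    intro u v h h'
    have h1 := G.asymm u v
    have h2 := G.asymm v u
    unfold Xor' at h h'
    unfold Xor at h h'
    tauto

/-- Homomorphism of oriented graphs. -/
def IsHom {V W : Type} (G : OGraph V) (H : OGraph W) (f : V → W) : Prop :=
  ∀ u v, G.arc u v → H.arc (f u) (f v)

/-- Isomorphism of oriented graphs along an equivalence. -/
def IsIso {V W : Type} (G : OGraph V) (H : OGraph W) (e : V ≃ W) : Prop :=
  ∀ u v, G.arc u v ↔ H.arc (e u) (e v)

/-- The anti-twinned graph `R(G)` on two copies of the vertices:
`inl` is the original copy, `inr` the pushed (primed) copy. -/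
def antiTwin {V : Type} (G : OGraph V) : OGraph (V ⊕ V) where
  arc x y :=
    match x, y with
    | Sum.inl u, Sum.inl v => G.arc u v
    | Sum.inr u, Sum.inr v => G.arc u v
    | Sum.inl u, Sum.inr v => G.arc v u
    | Sum.inr u, Sum.inl v => G.arc v u
  asymm := by
    rintro (u | u) (v | v) h h' <;> exact G.asymm _ _ h h'

/-- The anti-twin of a vertex of `R(G)`: `x'` with `x'' = x`. -/
def tw {V : Type} : V ⊕ V → V ⊕ V := Sum.elim Sum.inr Sum.inl

/-- `H` is an orientation of the simple graph `G`. -/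
def IsOrientationOf {V : Type} (H : OGraph V) (G : SimpleGraph V) : Prop :=
  (∀ u v, H.arc u v → G.Adj u v) ∧ (∀ u v, G.Adj u v → H.arc u v ∨ H.arc v u)

end OGraph

/-- The directed 3-cycle. -/
def C3 : OGraph (Fin 3) where
  arc u v := v = u + 1
  asymm := by decide

namespace OGraph

variable {V W : Type}

def induce (G : OGraph V) (s : Set V) : OGraph s where
  arc u v := G.arc u v
  asymm u v := G.asymm u v

def IsAntiTwinPartition (G : OGraph V) (s t : Set V) (f : V → V) : Prop :=
  s ∪ t = Set.univ ∧ Disjoint s t ∧ Set.BijOn f s t ∧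
    ∀ u ∈ s, ∀ z, (G.arc (f u) z ↔ G.arc z u) ∧ (G.arc z (f u) ↔ G.arc u z)

theorem IsIso.arc_iff_arc_symm {G : OGraph V} {H : OGraph W} {e : V ≃ W} (he : IsIso G H e)
    (a b : W) : H.arc a b ↔ G.arc (e.symm a) (e.symm b) := by
  rw [he, e.apply_symm_apply, e.apply_symm_apply]

theorem IsIso.isAntiTwinPartition_image {G : OGraph V} {H : OGraph W} {e : V ≃ W}
    (he : IsIso G H e) {s t : Set V} {f : V → V} (h : G.IsAntiTwinPartition s t f) :
    H.IsAntiTwinPartition (e '' s) (e '' t) (e ∘ f ∘ e.symm) := by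
  obtain ⟨hunion, hdisj, hbij, hN⟩ := h
  have hconj : Function.Semiconj e f (e ∘ f ∘ e.symm) := fun x => by simp
  refine ⟨?_, (Set.disjoint_image_iff e.injective).mpr hdisj,
    hconj.bijOn_image hbij e.injective.injOn, ?_⟩
  · rw [← Set.image_union, hunion, Set.image_univ_of_surjective e.surjective]
  · rintro _ ⟨u, hu, rfl⟩ z
    simpa only [he.arc_iff_arc_symm, Function.comp_apply, e.symm_apply_apply] using
      hN u hu (e.symm z)

theorem antiTwin_arc_swap_left (T : OGraph W) (x y : W ⊕ W) :
    T.antiTwin.arc x.swap y ↔ T.antiTwin.arc y x := by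
  rcases x with x | x <;> rcases y with y | y <;> rfl

theorem antiTwin_arc_swap_right (T : OGraph W) (x y : W ⊕ W) :
    T.antiTwin.arc y x.swap ↔ T.antiTwin.arc x y := by
  rcases x with x | x <;> rcases y with y | y <;> rfl

theorem isAntiTwinPartition_antiTwin (T : OGraph W) :
    T.antiTwin.IsAntiTwinPartition (Set.range Sum.inl) (Set.range Sum.inr) Sum.swap := by
  refine ⟨Set.range_inl_union_range_inr, Set.isCompl_range_inl_range_inr.disjoint, ?_,
    fun x _ y => ⟨antiTwin_arc_swap_left T x y, antiTwin_arc_swap_right T x y⟩⟩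
  have himage : Sum.swap '' Set.range (Sum.inl : W → W ⊕ W) = Set.range Sum.inr := by
    rw [← Set.range_comp]; rfl
  exact himage ▸ Sum.swap_leftInverse.injective.injOn.bijOn_image

/-- The vertices of `R(G[s])` placed in `G`: the original copy of `s` stays, the primed copy
goes to `t` along `f`. -/
noncomputable def IsAntiTwinPartition.equiv {G : OGraph V} {s t : Set V} {f : V → V}
    (h : G.IsAntiTwinPartition s t f) : s ⊕ s ≃ V :=
  Equiv.ofBijective (Sum.elim Subtype.val (f ∘ Subtype.val)) <| by
    obtain ⟨hunion, hdisj, hbij, -⟩ := h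
    refine ⟨Subtype.val_injective.sumElim hbij.injOn.injective ?_, ?_⟩
    · exact fun u v huv => Set.disjoint_left.mp hdisj u.2 (huv ▸ hbij.mapsTo v.2)
    · rw [← Set.range_eq_univ, Set.Sum.elim_range, Set.range_comp, Subtype.range_coe,
        hbij.image_eq, hunion]

theorem IsAntiTwinPartition.isIso_antiTwin_induce {G : OGraph V} {s t : Set V} {f : V → V}
    (h : G.IsAntiTwinPartition s t f) : IsIso (G.induce s).antiTwin G h.equiv := by
  have hN := h.2.2.2
  rintro (⟨u, hu⟩ | ⟨u, hu⟩) (⟨v, hv⟩ | ⟨v, hv⟩)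
  · exact Iff.rfl
  · exact ((hN v hv u).2).symm
  · exact ((hN u hu v).1).symm
  · exact ((hN v hv u).1).symm.trans (hN u hu (f v)).1.symm

end OGraph

/-- An oriented graph `S` is splitable (isomorphic to `R(T)` for some
oriented graph `T`) iff its vertices can be partitioned into `V₁, V₂` with a bijection
`f : V₁ → V₂` such that `N⁺(u) = N⁻(f(u))` and `N⁻(u) = N⁺(f(u))` for all `u ∈ V₁`. -/
theorem splitable_iff_antitwin_partition {V : Type} (S : OGraph V) :
    (∃ (W : Type) (T : OGraph W) (e : (W ⊕ W) ≃ V), OGraph.IsIso T.antiTwin S e) ↔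
    (∃ (V1 V2 : Set V) (f : V → V),
      V1 ∪ V2 = Set.univ ∧ Disjoint V1 V2 ∧ Set.BijOn f V1 V2 ∧
      ∀ u ∈ V1, ∀ z,
        (S.arc (f u) z ↔ S.arc z u) ∧ (S.arc z (f u) ↔ S.arc u z)) := by
  constructor
  · rintro ⟨W, T, e, he⟩
    exact ⟨_, _, _, he.isAntiTwinPartition_image (OGraph.isAntiTwinPartition_antiTwin T)⟩
  · rintro ⟨V1, V2, f, h⟩
    exact ⟨V1, S.induce V1, _, OGraph.IsAntiTwinPartition.isIso_antiTwin_induce h⟩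
end

section
/- If two vertices x and y of an oriented graph have at least one common neighbor on which they agree and at least one common neighbor on which they disagree (i.e., min(|A_{x,y}|,|D_{x,y}|) ≥ 1), then under any homomorphism of any push-presentation of the graph to an oriented graph, x and y must have distinct images. -/
/-- `x` and `y` agree on `z`: `z` is a common out-neighbor or common in-neighbor. -/
def Agree {V : Type} (G : OGraph V) (x y z : V) : Prop :=
  (G.arc x z ∧ G.arc y z) ∨ (G.arc z x ∧ G.arc z y)

/-- `x` and `y` disagree on `z`. -/
def Disagree {V : Type} (G : OGraph V) (x y z : V) : Prop :=
  (G.arc x z ∧ G.arc z y) ∨ (G.arc z x ∧ G.arc y z)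

namespace OGraph

variable {V : Type} (G : OGraph V) (S : Set V)

lemma push_arc_of_mem_iff {u v : V} (h : u ∈ S ↔ v ∈ S) :
    (G.push S).arc u v ↔ G.arc u v := by
  have hx : ¬Xor' (u ∈ S) (v ∈ S) := fun hx => (xor_iff_not_iff _ _).mp hx h
  simp only [push, hx, false_and, not_false_eq_true, true_and, false_or]

lemma push_arc_of_not_mem_iff {u v : V} (h : ¬(u ∈ S ↔ v ∈ S)) :
    (G.push S).arc u v ↔ G.arc v u := by
  have hx : Xor' (u ∈ S) (v ∈ S) := xor_iff_not_iff _ _ |>.mpr h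
  simp only [push, hx, true_and, not_true_eq_false, false_and, or_false]

/-- Pushing flips each arc at `z` whose other end lies on the other side of `S`, so it keeps
agreement and disagreement of `x, y` when they lie on the same side and swaps them otherwise. -/
lemma disagree_push_iff_of_mem_iff {x y : V} (hxy : x ∈ S ↔ y ∈ S) (z : V) :
    Disagree (G.push S) x y z ↔ Disagree G x y z := by
  by_cases hx : x ∈ S <;> by_cases hy : y ∈ S <;> by_cases hz : z ∈ S <;>
    simp (disch := simp [hx, hy, hz]) only [Disagree, push_arc_of_mem_iff,
      push_arc_of_not_mem_iff] <;> tauto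

lemma disagree_push_iff_of_not_mem_iff {x y : V} (hxy : ¬(x ∈ S ↔ y ∈ S)) (z : V) :
    Disagree (G.push S) x y z ↔ Agree G x y z := by
  by_cases hx : x ∈ S <;> by_cases hy : y ∈ S <;> by_cases hz : z ∈ S <;>
    simp (disch := simp [hx, hy, hz]) only [Disagree, Agree, push_arc_of_mem_iff,
      push_arc_of_not_mem_iff] <;> tauto

lemma exists_disagree_push {x y : V} (ha : ∃ z, Agree G x y z) (hd : ∃ z, Disagree G x y z) :
    ∃ z, Disagree (G.push S) x y z := by
  by_cases hxy : x ∈ S ↔ y ∈ S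
  · simpa only [disagree_push_iff_of_mem_iff G S hxy] using hd
  · simpa only [disagree_push_iff_of_not_mem_iff G S hxy] using ha

lemma IsHom.ne_of_disagree {W : Type} {G : OGraph V} {H : OGraph W} {f : V → W}
    (hf : IsHom G H f) {x y z : V} (hz : Disagree G x y z) : f x ≠ f y := by
  intro hxy
  rcases hz with ⟨hxz, hzy⟩ | ⟨hzx, hyz⟩
  · exact H.asymm _ _ (hxy ▸ hf _ _ hxz) (hf _ _ hzy)
  · exact H.asymm _ _ (hf _ _ hzx) (hxy ▸ hf _ _ hyz)

end OGraph

/-- If `x` and `y` have a common neighbor on which they agree and one on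
which they disagree, then no homomorphism of any push-presentation of the graph to any
oriented graph identifies `x` and `y`. -/
theorem agree_disagree_forces_distinct_images {V : Type} (G : OGraph V) (x y : V)
    (ha : ∃ z, Agree G x y z) (hd : ∃ z, Disagree G x y z) :
    ∀ (W : Type) (H : OGraph W) (S : Set V) (f : V → W),
      OGraph.IsHom (G.push S) H f → f x ≠ f y := by
  intro W H S f hf
  obtain ⟨z, hz⟩ := G.exists_disagree_push S ha hd
  exact hf.ne_of_disagree hz
end
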